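/- Let β_ij (i ≠ j) be smooth functions on an open subset of ℝ^n satisfying ∂_k β_ij = β_ik β_kj for distinct i,j,k, Σ_k ∂_k β_ij = 0, and Σ_k u^k ∂_k β_ij = −β_ij. Let Γ be the off-diagonal matrix with entries β_ij, U = diag(u^1,...,u^n), V the matrix with entries V_ij = (u^i−u^j)β_ij, and E_k the matrix unit with (E_k)_ij = δ_ik δ_kj. Then V satisfies the isomonodromy equations ∂_k V = [V, [E_k, Γ]] for k = 1,...,n, provided additionally ∂_i β_ij and ∂_j β_ij are determined by the three scalar conditions (i.e., the full system (cv1)-(qo) holds). -/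

import Mathlib

open Matrix

/-- Partial derivative `∂_k F` at `u`. -/
noncomputable def pd {n : ℕ} (k : Fin n) (F : (Fin n → ℝ) → ℝ) (u : Fin n → ℝ) : ℝ :=
  fderiv ℝ F u (Pi.single k 1)

lemma pd_lin_mul {n : ℕ} (i j k : Fin n) (g : (Fin n → ℝ) → ℝ) (u : Fin n → ℝ)
    (hg : DifferentiableAt ℝ g u) :
    pd k (fun x => (x i - x j) * g x) u
      = ((if i = k then (1:ℝ) else 0) - (if j = k then 1 else 0)) * g u
        + (u i - u j) * pd k g u := by
  have hi : HasFDerivAt (fun x : Fin n → ℝ => x i)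
      (ContinuousLinearMap.proj i : (Fin n → ℝ) →L[ℝ] ℝ) u :=
    by exact (ContinuousLinearMap.proj i : (Fin n → ℝ) →L[ℝ] ℝ).hasFDerivAt (x := u)
  have hj : HasFDerivAt (fun x : Fin n → ℝ => x j)
      (ContinuousLinearMap.proj j : (Fin n → ℝ) →L[ℝ] ℝ) u :=
    by exact (ContinuousLinearMap.proj j : (Fin n → ℝ) →L[ℝ] ℝ).hasFDerivAt (x := u)
  have h : HasFDerivAt (fun x => (x i - x j) * g x) _ u := ((hi.sub hj).mul hg.hasFDerivAt)
  rw [pd, h.fderiv]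
  simp [Pi.single_apply, pd]
  ring

/-- If the rotation coefficients `β_ij` (no symmetry assumed) satisfy the full system
(cv1) `∂_k β_ij = β_ik β_kj` for pairwise distinct `i,j,k`,
(cv2) `Σ_k ∂_k β_ij = 0`, and (qo) `Σ_k u^k ∂_k β_ij = −β_ij` for `i ≠ j`,
then `V_ij = (u^i−u^j)β_ij` satisfies the isomonodromy equations
`∂_k V = [V, [E_k, Γ]]` for every `k`. -/
theorem stmt15 {n : ℕ} (U : Set (Fin n → ℝ)) (hU : IsOpen U)
    (hdist : ∀ u ∈ U, Function.Injective u)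
    (β : Fin n → Fin n → (Fin n → ℝ) → ℝ)
    (hβsmooth : ∀ i j : Fin n, i ≠ j → ContDiff ℝ (⊤ : ℕ∞) (β i j))
    (cv1 : ∀ i j k : Fin n, i ≠ j → j ≠ k → i ≠ k → ∀ u ∈ U,
      pd k (β i j) u = β i k u * β k j u)
    (cv2 : ∀ i j : Fin n, i ≠ j → ∀ u ∈ U, ∑ k, pd k (β i j) u = 0)
    (qo : ∀ i j : Fin n, i ≠ j → ∀ u ∈ U, ∑ k, u k * pd k (β i j) u = -(β i j u))
    (Γ V : (Fin n → ℝ) → Matrix (Fin n) (Fin n) ℝ)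
    (hΓ : ∀ u i j, Γ u i j = if i = j then 0 else β i j u)
    (hV : ∀ u i j, V u i j = (u i - u j) * Γ u i j)
    (E : Fin n → Matrix (Fin n) (Fin n) ℝ)
    (hE : ∀ k, E k = Matrix.single k k 1) :
    ∀ u ∈ U, ∀ k i j : Fin n,
      pd k (fun u' => V u' i j) u
        = (V u * (E k * Γ u - Γ u * E k) - (E k * Γ u - Γ u * E k) * V u) i j := by
  intro u hu k i j
  have hVd : ∀ (u' : Fin n → ℝ) (m : Fin n), V u' m m = 0 := by
    intro u' m; rw [hV]; simp
  have hΓd : ∀ (u' : Fin n → ℝ) (m : Fin n), Γ u' m m = 0 := by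
    intro u' m; rw [hΓ]; simp
  -- entries of E k * Γ u and Γ u * E k
  have hEΓ : ∀ a b : Fin n, (E k * Γ u) a b = if a = k then Γ u k b else 0 := by
    intro a b; rw [hE]
    by_cases h : a = k
    · subst h; simp [Matrix.single_mul_apply_same]
    · simp only [Matrix.mul_apply, Matrix.single, Matrix.of_apply, ite_mul, one_mul,
        zero_mul, if_neg h]
      exact Finset.sum_eq_zero fun x _ => by
        rw [if_neg]; rintro ⟨h1, h2⟩; exact h h1.symm
  have hΓE : ∀ a b : Fin n, (Γ u * E k) a b = if b = k then Γ u a k else 0 := by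
    intro a b; rw [hE]
    by_cases h : b = k
    · subst h; simp [Matrix.mul_single_apply_same]
    · simp only [Matrix.mul_apply, Matrix.single, Matrix.of_apply, mul_ite, mul_one,
        mul_zero, if_neg h]
      exact Finset.sum_eq_zero fun x _ => by
        rw [if_neg]; rintro ⟨h1, h2⟩; exact h h2.symm
  have hRHS : (V u * (E k * Γ u - Γ u * E k) - (E k * Γ u - Γ u * E k) * V u) i j
      = V u i k * Γ u k j - (if j = k then ∑ m, V u i m * Γ u m k else 0)
        - ((if i = k then ∑ m, Γ u k m * V u m j else 0) - Γ u i k * V u k j) := by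
    simp only [Matrix.sub_apply, Matrix.mul_apply, hEΓ, hΓE, mul_sub, sub_mul, mul_ite,
      ite_mul, mul_zero, zero_mul, Finset.sum_sub_distrib]
    rw [Finset.sum_ite_eq' Finset.univ k (fun m => V u i m * Γ u k j),
      Finset.sum_ite_eq' Finset.univ k (fun m => Γ u i k * V u m j)]
    simp [Finset.sum_ite_of_true, apply_ite]
  rw [hRHS]
  by_cases hij : i = j
  · -- diagonal entry: both sides vanish
    subst hij
    have hfun : (fun u' => V u' i i) = fun _ : Fin n → ℝ => (0 : ℝ) :=
      funext fun u' => hVd u' i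
    rw [hfun]
    have key0 : ∀ a b : Fin n, V u a b * Γ u b a + Γ u a b * V u b a = 0 := by
      intro a b
      by_cases h : a = b
      · subst h; rw [hVd, hΓd]; ring
      · rw [hV, hV, hΓ, hΓ, if_neg h, if_neg (Ne.symm h)]; ring
    have hpd0 : pd k (fun _ : Fin n → ℝ => (0 : ℝ)) u = 0 := by
      simp [pd]
    rw [hpd0]
    by_cases hik : i = k
    · subst hik
      simp only [if_pos rfl, hVd, hΓd, zero_mul, mul_zero, eq_self_iff_true, if_true]
      have : (∑ m, V u i m * Γ u m i) + (∑ m, Γ u i m * V u m i) = 0 := by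
        rw [← Finset.sum_add_distrib]
        exact Finset.sum_eq_zero fun m _ => key0 i m
      linarith
    · simp only [if_neg hik]
      have := key0 i k
      linarith
  · -- off-diagonal entry
    have hfun : (fun u' => V u' i j) = fun u' => (u' i - u' j) * β i j u' :=
      funext fun u' => by rw [hV, hΓ, if_neg hij]
    rw [hfun, pd_lin_mul i j k (β i j) u
      (((hβsmooth i j hij).differentiable (by simp)) u)]
    by_cases hik : i = k
    · -- k = i
      subst hik
      have hjk : ¬ j = i := fun h => hij h.symm
      simp only [if_pos rfl, if_neg hjk, hVd, hΓd, zero_mul, mul_zero, sub_zero, zero_sub,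
        eq_self_iff_true, if_true]
      -- goal: (1-0) * β i j u + (u i - u j) * pd i (β i j) u = -(∑ m, Γ u i m * V u m j)
      have hsplit : ∑ m, (u m - u j) * pd m (β i j) u = -(β i j u) := by
        have e1 : ∑ m, (u m - u j) * pd m (β i j) u
            = (∑ m, u m * pd m (β i j) u) - u j * ∑ m, pd m (β i j) u := by
          rw [Finset.mul_sum, ← Finset.sum_sub_distrib]
          exact Finset.sum_congr rfl fun m _ => by ring
        rw [e1, qo i j hij u hu, cv2 i j hij u hu, mul_zero, sub_zero]
      have hterm : ∀ m : Fin n, (u m - u j) * pd m (β i j) u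
          = Γ u i m * V u m j + (if m = i then (u i - u j) * pd i (β i j) u else 0) := by
        intro m
        by_cases hmi : m = i
        · subst hmi; rw [hΓd, if_pos rfl]; ring
        · by_cases hmj : m = j
          · subst hmj; rw [hVd, if_neg hmi]; ring
          · rw [cv1 i j m hij (Ne.symm hmj) (Ne.symm hmi) u hu,
              hΓ, if_neg (Ne.symm hmi), hV, hΓ, if_neg hmj, if_neg hmi]
            ring
      have hsum : ∑ m, (u m - u j) * pd m (β i j) u
          = (∑ m, Γ u i m * V u m j) + (u i - u j) * pd i (β i j) u := by
        rw [Finset.sum_congr rfl fun m _ => hterm m, Finset.sum_add_distrib,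
          Finset.sum_ite_eq' Finset.univ i (fun _ => (u i - u j) * pd i (β i j) u)]
        simp
      rw [hsplit] at hsum
      linarith
    · by_cases hjk : j = k
      · -- k = j
        subst hjk
        simp only [if_pos rfl, if_neg hik, hVd, hΓd, zero_mul, mul_zero, sub_zero, zero_sub,
          eq_self_iff_true, if_true]
        have hsplit : ∑ m, (u i - u m) * pd m (β i j) u = β i j u := by
          have e1 : ∑ m, (u i - u m) * pd m (β i j) u
              = u i * (∑ m, pd m (β i j) u) - ∑ m, u m * pd m (β i j) u := by
            rw [Finset.mul_sum, ← Finset.sum_sub_distrib]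
            exact Finset.sum_congr rfl fun m _ => by ring
          rw [e1, qo i j hij u hu, cv2 i j hij u hu, mul_zero, zero_sub, neg_neg]
        have hterm : ∀ m : Fin n, (u i - u m) * pd m (β i j) u
            = V u i m * Γ u m j + (if m = j then (u i - u j) * pd j (β i j) u else 0) := by
          intro m
          by_cases hmj : m = j
          · subst hmj; rw [hΓd, if_pos rfl]; ring
          · by_cases hmi : m = i
            · subst hmi; rw [hVd, if_neg hmj]; ring
            · have hmi' : ¬ i = m := fun h => hmi h.symm
              rw [cv1 i j m hij (Ne.symm hmj) (Ne.symm hmi) u hu]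
              simp only [hV, hΓ, if_neg hmi, if_neg hmj, if_neg hmi']
              ring
        have hsum : ∑ m, (u i - u m) * pd m (β i j) u
            = (∑ m, V u i m * Γ u m j) + (u i - u j) * pd j (β i j) u := by
          rw [Finset.sum_congr rfl fun m _ => hterm m, Finset.sum_add_distrib,
            Finset.sum_ite_eq' Finset.univ j (fun _ => (u i - u j) * pd j (β i j) u)]
          simp
        rw [hsplit] at hsum
        linarith
      · -- k distinct from i and j
        simp only [if_neg hik, if_neg hjk]
        have hkj : ¬ k = j := fun h => hjk h.symm
        rw [cv1 i j k hij hjk hik u hu]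
        simp only [hV, hΓ, if_neg hik, if_neg hkj]
        ring
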